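/- Let (F, τ) be a difference field of characteristic zero with field of constants k = F^τ. The following are equivalent: (1) for every n ≥ 1, all p_0, …, p_n ∈ F with p_0 ≠ 0 and p_n ≠ 0, and every f ∈ F, there exists a nonzero y ∈ F with Σ_{i=0}^n p_i τ^i(y) = f; (2) for every n ≥ 1 and all p_0, …, p_n ∈ F with p_0 ≠ 0 and p_n ≠ 0, the set { y ∈ F : Σ_{i=0}^n p_i τ^i(y) = 0 } is a k-vector subspace of F of dimension exactly n. -/

import Mathlib

/-!
(1) ⇒ (2). By (1), `L = Σ pᵢ τⁱ` of order `n` has a solution `y₁ ≠ 0`, and Abel summation turns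
`L (y₁ u)` into `M (τ u - u)` for an operator `M` of order `n - 1` whose end coefficients are
again nonzero. Multiplication by `y₁` is bijective, and `τ - 1` is surjective by (1) with kernel
`k`, so `dim ker L = dim ker M + 1`; induction on `n` gives `dim ker L = n`.

(2) ⇒ (1). For `f ≠ 0` put `g = τ f / f`. The operator `y ↦ τ (L y) - g L y` has order `n + 1`,
so its solution space is strictly larger than `ker L` and contains `y₀` with `L y₀ ≠ 0`. Then
`τ (L y₀) = g L y₀` says that `c = L y₀ / f` is a constant, and `y = c⁻¹ y₀` solves `L y = f`.
-/

noncomputable section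

variable {F : Type*} [Field F]

def kfix (τ : F →+* F) : Subfield F := RingHom.eqLocusField τ (RingHom.id F)

open Finset LinearMap Fin.NatCast

universe u

theorem LinearMap.rank_ker_comp_of_surjective {K : Type*} {M M₁ : Type u} {M₂ : Type*}
    [DivisionRing K] [AddCommGroup M] [Module K M] [AddCommGroup M₁] [Module K M₁]
    [AddCommGroup M₂] [Module K M₂] {f : M →ₗ[K] M₁} (hf : Function.Surjective f)
    (g : M₁ →ₗ[K] M₂) :
    Module.rank K (ker (g ∘ₗ f)) = Module.rank K (ker g) + Module.rank K (ker f) := by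
  have hmaps : ∀ x ∈ ker (g ∘ₗ f), f x ∈ ker g := fun x hx => hx
  let f' := f.restrict hmaps
  have hf' : Function.Surjective f' := by
    rintro ⟨w, hw⟩
    obtain ⟨x, rfl⟩ := hf w
    exact ⟨⟨x, hw⟩, rfl⟩
  rw [rank_eq_of_surjective hf', ker_restrict,
    (Submodule.comapSubtypeEquivOfLe (ker_le_ker_comp f g)).rank_eq]

section

variable (τ : F →+* F)

theorem mem_kfix {x : F} : x ∈ kfix τ ↔ τ x = x := Iff.rfl

def tauLin : F →ₗ[kfix τ] F where
  toFun := τ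
  map_add' := map_add τ
  map_smul' c y := by
    simp only [Subfield.smul_def, smul_eq_mul, map_mul, RingHom.id_apply]
    rw [show τ c = c from c.2]

def diffOp (n : ℕ) (p : ℕ → F) : F →ₗ[kfix τ] F :=
  ∑ i ∈ range (n + 1), mulLeft (kfix τ) (p i) ∘ₗ tauLin τ ^ i

theorem diffOp_apply (n : ℕ) (p : ℕ → F) (y : F) :
    diffOp τ n p y = ∑ i ∈ range (n + 1), p i * τ^[i] y := by
  simp [diffOp, LinearMap.sum_apply, Module.End.pow_apply, tauLin]

def delta : F →ₗ[kfix τ] F := tauLin τ - LinearMap.id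

theorem delta_apply (y : F) : delta τ y = τ y - y := rfl

theorem ker_delta : ker (delta τ) = (kfix τ) ∙ (1 : F) := by
  ext x
  rw [mem_ker, delta_apply, sub_eq_zero, Submodule.mem_span_singleton]
  refine ⟨fun hx => ⟨⟨x, hx⟩, mul_one x⟩, ?_⟩
  rintro ⟨c, rfl⟩
  rw [Subfield.smul_def, smul_eq_mul, mul_one]
  exact c.2

theorem rank_ker_delta : Module.rank (kfix τ) (ker (delta τ)) = 1 := by
  rw [ker_delta, ← Module.finrank_eq_rank, finrank_span_singleton one_ne_zero, Nat.cast_one]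

theorem iterate_eq_add_sum (u : F) (i : ℕ) :
    τ^[i] u = u + ∑ j ∈ range i, τ^[j] (τ u - u) := by
  rw [← sub_eq_iff_eq_add']
  refine (sum_range_sub (fun j => τ^[j] u) i).symm.trans (sum_congr rfl fun j _ => ?_)
  rw [Function.iterate_succ_apply, ← RingHom.coe_pow, map_sub]

theorem sum_mul_iterate_eq (q : ℕ → F) (n : ℕ) (u : F) :
    ∑ i ∈ range (n + 1), q i * τ^[i] u =
      (∑ i ∈ range (n + 1), q i) * u +
        ∑ j ∈ range n, (∑ i ∈ Ico (j + 1) (n + 1), q i) * τ^[j] (τ u - u) := by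
  simp_rw [iterate_eq_add_sum τ u, mul_add, sum_add_distrib, sum_mul, mul_sum]
  congr 1
  exact sum_comm' fun i j => by simp only [Finset.mem_range, mem_Ico]; omega

theorem diffOp_comp_mulLeft_of_apply_eq_zero {n : ℕ} {p : ℕ → F} {y₁ : F}
    (hy₁ : diffOp τ (n + 1) p y₁ = 0) :
    diffOp τ (n + 1) p ∘ₗ mulLeft (kfix τ) y₁ =
      diffOp τ n (fun j => ∑ i ∈ Ico (j + 1) (n + 2), p i * τ^[i] y₁) ∘ₗ delta τ := by
  ext u
  rw [diffOp_apply] at hy₁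
  have htwist : ∀ i, p i * τ^[i] (y₁ * u) = p i * τ^[i] y₁ * τ^[i] u := fun i => by
    rw [← RingHom.coe_pow, map_mul, mul_assoc]
  simp only [comp_apply, mulLeft_apply, diffOp_apply, delta_apply, htwist]
  rw [sum_mul_iterate_eq, hy₁, zero_mul, zero_add]

theorem iterate_ne_zero {y : F} (hy : y ≠ 0) (i : ℕ) : τ^[i] y ≠ 0 := by
  rw [← RingHom.coe_pow]
  exact (map_ne_zero _).mpr hy

theorem ker_diffOp_zero {p : ℕ → F} (h0 : p 0 ≠ 0) : ker (diffOp τ 0 p) = ⊥ :=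
  ker_eq_bot'.mpr fun y hy => by simpa [diffOp_apply, h0] using hy

theorem rank_ker_diffOp (hΔ : Function.Surjective (delta τ))
    (hsol : ∀ n (p : ℕ → F), p 0 ≠ 0 → p (n + 1) ≠ 0 → ∃ y ≠ 0, diffOp τ (n + 1) p y = 0)
    (n : ℕ) {p : ℕ → F} (h0 : p 0 ≠ 0) (hn : p n ≠ 0) :
    Module.rank (kfix τ) (ker (diffOp τ n p)) = n := by
  induction n generalizing p with
  | zero => rw [ker_diffOp_zero τ h0, rank_bot, Nat.cast_zero]
  | succ n ih =>
    obtain ⟨y₁, hy₁, hLy₁⟩ := hsol n p h0 hn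
    have hQ0 : ∑ i ∈ Ico 1 (n + 2), p i * τ^[i] y₁ ≠ 0 := by
      rw [diffOp_apply, range_eq_Ico, sum_eq_sum_Ico_succ_bot (by omega)] at hLy₁
      rw [eq_neg_of_add_eq_zero_right hLy₁, neg_ne_zero]
      exact mul_ne_zero h0 hy₁
    have hQn : ∑ i ∈ Ico (n + 1) (n + 2), p i * τ^[i] y₁ ≠ 0 := by
      rw [Nat.Ico_succ_singleton, sum_singleton]
      exact mul_ne_zero hn (iterate_ne_zero τ hy₁ _)
    have hmul : Function.Surjective (mulLeft (kfix τ) y₁) := fun v =>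
      ⟨y₁⁻¹ * v, mul_inv_cancel_left₀ hy₁ v⟩
    have hker_mul : ker (mulLeft (kfix τ) y₁) = ⊥ :=
      ker_eq_bot.mpr (mul_right_injective₀ hy₁)
    calc Module.rank (kfix τ) (ker (diffOp τ (n + 1) p))
        = Module.rank (kfix τ) (ker (diffOp τ (n + 1) p)) +
            Module.rank (kfix τ) (ker (mulLeft (kfix τ) y₁)) := by
          rw [hker_mul, rank_bot, add_zero]
      _ = Module.rank (kfix τ) (ker (diffOp τ (n + 1) p ∘ₗ mulLeft (kfix τ) y₁)) :=
          (rank_ker_comp_of_surjective hmul _).symm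
      _ = n + 1 := by
          rw [diffOp_comp_mulLeft_of_apply_eq_zero τ hLy₁, rank_ker_comp_of_surjective hΔ,
            ih hQ0 hQn, rank_ker_delta]
      _ = (n + 1 : ℕ) := by norm_cast

-- The guard `i = n + 1` drops `p (n + 1)`, which `diffOp τ n p` never reads.
theorem diffOp_succ_apply_eq_map_sub_mul (n : ℕ) (p : ℕ → F) (g y : F) :
    diffOp τ (n + 1)
        (fun i => (if i = 0 then 0 else τ (p (i - 1))) - if i = n + 1 then 0 else g * p i) y =
      τ (diffOp τ n p y) - g * diffOp τ n p y := by
  simp only [diffOp_apply, sub_mul, sum_sub_distrib]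
  congr 1
  · rw [sum_range_succ', map_sum]
    simp [Function.iterate_succ_apply']
  · rw [sum_range_succ, mul_sum]
    simp only [↓reduceIte, zero_mul, add_zero]
    refine sum_congr rfl fun i hi => ?_
    rw [if_neg (by simp at hi; omega), mul_assoc]

theorem exists_ne_zero_diffOp_eq
    (h2 : ∀ n, 1 ≤ n → ∀ p : ℕ → F, p 0 ≠ 0 → p n ≠ 0 →
      Module.finrank (kfix τ) (ker (diffOp τ n p)) = n)
    {n : ℕ} (hn : 1 ≤ n) {p : ℕ → F} (h0 : p 0 ≠ 0) (hpn : p n ≠ 0) (f : F) :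
    ∃ y ≠ 0, diffOp τ n p y = f := by
  have hL := h2 n hn p h0 hpn
  rcases eq_or_ne f 0 with rfl | hf
  · have hne : ker (diffOp τ n p) ≠ ⊥ := fun h => by rw [h, finrank_bot] at hL; omega
    obtain ⟨y, hy, hy0⟩ := Submodule.exists_mem_ne_zero_of_ne_bot hne
    exact ⟨y, hy0, hy⟩
  set g := τ f / f
  set r : ℕ → F := fun i =>
    (if i = 0 then 0 else τ (p (i - 1))) - if i = n + 1 then 0 else g * p i
  have hτf : τ f ≠ 0 := (map_ne_zero τ).mpr hf
  have hr0 : r 0 ≠ 0 := by simp [r, g, h0, hf, hτf]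
  have hrn : r (n + 1) ≠ 0 := by simp [r, hpn]
  have hM := h2 (n + 1) (by omega) r hr0 hrn
  obtain ⟨y₀, hy₀M, hy₀L⟩ : ∃ y₀ ∈ ker (diffOp τ (n + 1) r), y₀ ∉ ker (diffOp τ n p) := by
    by_contra! hle
    have : Module.Finite (kfix τ) (ker (diffOp τ n p)) := Module.finite_of_finrank_pos (by omega)
    have := Submodule.finrank_mono hle
    omega
  rw [mem_ker, diffOp_succ_apply_eq_map_sub_mul, sub_eq_zero] at hy₀M
  rw [mem_ker] at hy₀L
  have hfix : diffOp τ n p y₀ / f ∈ kfix τ := by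
    rw [mem_kfix, map_div₀, hy₀M]
    field_simp
    exact div_mul_cancel₀ (τ f) hf
  set c : kfix τ := ⟨_, hfix⟩
  have hLy : diffOp τ n p (c⁻¹ • y₀) = f := by
    rw [map_smul, Subfield.smul_def, smul_eq_mul, Subfield.coe_inv]
    exact (inv_div _ f).symm ▸ div_mul_cancel₀ f hy₀L
  exact ⟨c⁻¹ • y₀, fun h => hf (by rw [← hLy, h, map_zero]), hLy⟩

theorem diffOp_apply_eq_sum_fin (n : ℕ) (p : ℕ → F) (y : F) :
    diffOp τ n p y = ∑ i : Fin (n + 1), p i * τ^[i] y := by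
  rw [diffOp_apply, Fin.sum_univ_eq_sum_range (fun i => p i * τ^[i] y)]

end

theorem stmt_13_general {F : Type*} [Field F] (τ : F →+* F) :
    (∀ n : ℕ, 1 ≤ n → ∀ p : Fin (n + 1) → F, p 0 ≠ 0 → p (Fin.last n) ≠ 0 →
      ∀ f : F, ∃ y : F, y ≠ 0 ∧ ∑ i : Fin (n + 1), p i * τ^[(i : ℕ)] y = f) ↔
    (∀ n : ℕ, 1 ≤ n → ∀ p : Fin (n + 1) → F, p 0 ≠ 0 → p (Fin.last n) ≠ 0 →
      ∃ V : Submodule (kfix τ) F,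
        (∀ y : F, y ∈ V ↔ ∑ i : Fin (n + 1), p i * τ^[(i : ℕ)] y = 0) ∧
        Module.finrank (kfix τ) V = n) := by
  -- `fun i => p i` reads `p` through the cast `ℕ → Fin (n + 1)`, which is exact on `i ≤ n`.
  have hsum (n : ℕ) (p : Fin (n + 1) → F) (y : F) :
      ∑ i : Fin (n + 1), p i * τ^[(i : ℕ)] y = diffOp τ n (fun i => p i) y := by
    simp [diffOp_apply_eq_sum_fin]
  constructor
  · intro h1 n hn p h0 hpn
    have hΔ : Function.Surjective (delta τ) := fun v => by
      obtain ⟨y, -, hy⟩ := h1 1 le_rfl ![-1, 1] (by simp) (by simp) v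
      exact ⟨y, by simpa [Fin.sum_univ_two, delta_apply, sub_eq_neg_add] using hy⟩
    have hsol (m : ℕ) (P : ℕ → F) (hP0 : P 0 ≠ 0) (hPm : P (m + 1) ≠ 0) :
        ∃ y ≠ 0, diffOp τ (m + 1) P y = 0 := by
      simpa [diffOp_apply_eq_sum_fin] using
        h1 (m + 1) (by omega) (fun i => P i) (by simpa) (by simpa) 0
    refine ⟨ker (diffOp τ n fun i => p i), fun y => by rw [mem_ker, hsum], ?_⟩
    exact Module.finrank_eq_of_rank_eq
      (rank_ker_diffOp τ hΔ hsol n (by simpa) (by simpa [Fin.natCast_eq_last]))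
  · intro h2 n hn p h0 hpn f
    have h2' (m : ℕ) (hm : 1 ≤ m) (P : ℕ → F) (hP0 : P 0 ≠ 0) (hPm : P m ≠ 0) :
        Module.finrank (kfix τ) (ker (diffOp τ m P)) = m := by
      obtain ⟨V, hV, hrank⟩ := h2 m hm (fun i => P i) (by simpa) (by simpa)
      have hVker : V = ker (diffOp τ m P) := by
        ext y
        rw [hV, mem_ker, diffOp_apply_eq_sum_fin]
      rwa [← hVker]
    simpa [hsum] using
      exists_ne_zero_diffOp_eq τ h2' hn (p := fun i => p i) (by simpa)
        (by simpa [Fin.natCast_eq_last]) f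

/-- `(F, τ)` is linearly `τ`-closed (every nontrivial inhomogeneous linear
`τ`-difference equation has a nonzero solution) iff every homogeneous equation
`Σ_{i=0}^n p_i τ^i(y) = 0` with `p_0 p_n ≠ 0` has solution set a `k`-subspace of `F` of
dimension exactly `n`. -/
theorem stmt_13 {F : Type*} [Field F] [CharZero F] (τ : F →+* F) :
    (∀ n : ℕ, 1 ≤ n → ∀ p : Fin (n + 1) → F, p 0 ≠ 0 → p (Fin.last n) ≠ 0 →
      ∀ f : F, ∃ y : F, y ≠ 0 ∧ ∑ i : Fin (n + 1), p i * τ^[(i : ℕ)] y = f) ↔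
    (∀ n : ℕ, 1 ≤ n → ∀ p : Fin (n + 1) → F, p 0 ≠ 0 → p (Fin.last n) ≠ 0 →
      ∃ V : Submodule (kfix τ) F,
        (∀ y : F, y ∈ V ↔ ∑ i : Fin (n + 1), p i * τ^[(i : ℕ)] y = 0) ∧
        Module.finrank (kfix τ) V = n) :=
  stmt_13_general τ
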